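/- arXiv:2505.00148 — 5 statements merged into one kernel-verified Lean document; each statement's English description precedes it below -/
import Mathlib

section
/- Let Ω ⊂ ℝ^n be open and bounded and let f : Ω × ℝ^N × ℝ^{Nn} → [0,∞) be such that x ↦ f(x,u,ξ) is Lebesgue integrable on Ω for every (u,ξ) ∈ ℝ^N × ℝ^{Nn} and (u,ξ) ↦ f(x,u,ξ) is convex for a.e. x ∈ Ω. Then there exists a measurable map g : Ω × [0,∞) → [0,∞) such that x ↦ g(x,M) is Lebesgue integrable on Ω for every M ≥ 0, and 0 ≤ f(x,u,ξ) ≤ g(x,M) holds for a.e. x ∈ Ω and all (u,ξ) ∈ ℝ^N × ℝ^{Nn} with max{|u|,|ξ|} ≤ M. -/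
/-!
A convex function is bounded on the convex hull of finitely many points by its largest value
at those points, hence, being nonnegative, by the sum of its values there. The cube
`[-k, k]^N × [-k, k]^{Nn}` contains every `(u, ξ)` with `max ‖u‖ ‖ξ‖ ≤ k`, so for `k = ⌈M⌉`
the sum of `f(x, ·)` over the finitely many vertices of this cube is an integrable bound; a
measurable representative of it, chosen for each `k ∈ ℕ`, gives `g`.
-/

open Real MeasureTheory Set

theorem ConvexOn.le_sum_of_mem_convexHull_range {E ι : Type*} [AddCommGroup E] [Module ℝ E]
    [Fintype ι] {φ : E → ℝ} (hφ : ConvexOn ℝ univ φ) {v : ι → E} (hv : ∀ i, 0 ≤ φ (v i))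
    {z : E} (hz : z ∈ convexHull ℝ (range v)) : φ z ≤ ∑ i, φ (v i) := by
  obtain ⟨_, ⟨i, rfl⟩, hle⟩ := hφ.exists_ge_of_mem_convexHull (subset_univ _) hz
  exact hle.trans (Finset.single_le_sum (fun j _ => hv j) (Finset.mem_univ i))

def cubeVertex {ι : Type*} (k : ℝ) (σ : ι → Bool) : EuclideanSpace ℝ ι :=
  WithLp.toLp 2 fun i => if σ i then k else -k

theorem mem_convexHull_range_cubeVertex {ι : Type*} [Fintype ι] {k : ℝ}
    {u : EuclideanSpace ℝ ι} (hu : ‖u‖ ≤ k) :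
    u ∈ convexHull ℝ (range (cubeVertex k)) := by
  have hsub : WithLp.toLp 2 '' pi univ (fun _ : ι => ({-k, k} : Set ℝ)) ⊆
      range (cubeVertex k) := by
    rintro _ ⟨w, hw, rfl⟩
    refine ⟨fun i => decide (w i = k), congrArg (WithLp.toLp 2) (funext fun i => ?_)⟩
    by_cases h : w i = k
    · simp [h]
    · simp [(hw i trivial).resolve_right h, eq_comm]
  have hcoord : u.ofLp ∈ convexHull ℝ (pi univ fun _ : ι => ({-k, k} : Set ℝ)) := by
    rw [convexHull_pi]
    intro i _
    have hi : |u i| ≤ k := (PiLp.norm_apply_le u i).trans hu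
    rw [convexHull_pair, segment_eq_Icc (by linarith [abs_nonneg (u i)])]
    exact abs_le.1 hi
  exact convexHull_mono hsub <|
    ((WithLp.linearEquiv 2 ℝ (ι → ℝ)).symm.toLinearMap.image_convexHull _).subset
      ⟨u.ofLp, hcoord, rfl⟩

theorem exists_measurable_uncurry_ae_eq_natCeil {X : Type*} [MeasurableSpace X]
    {μ : Measure X} {H : ℕ → X → ℝ} (hH : ∀ k, Integrable (H k) μ) (hH0 : ∀ k, 0 ≤ᵐ[μ] H k) :
    ∃ g : X → ℝ → ℝ, Measurable (Function.uncurry g) ∧ (∀ x M, 0 ≤ g x M) ∧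
      (∀ M, Integrable (fun x => g x M) μ) ∧ ∀ M, H ⌈M⌉₊ =ᵐ[μ] fun x => g x M := by
  set G : ℕ → X → ℝ := fun k => (hH k).1.mk (H k)
  refine ⟨fun x M => max (G ⌈M⌉₊ x) 0, ?_, fun _ _ => le_max_right _ _,
    fun M => ((hH _).congr (hH _).1.ae_eq_mk).pos_part, fun M => ?_⟩
  · have hG : Measurable fun p : X × ℕ => max (G p.2 p.1) 0 :=
      measurable_from_prod_countable_left fun k =>
        (hH k).1.stronglyMeasurable_mk.measurable.max measurable_const
    exact hG.comp (measurable_fst.prodMk (Nat.measurable_ceil.comp measurable_snd))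
  · filter_upwards [hH0 ⌈M⌉₊, (hH ⌈M⌉₊).1.ae_eq_mk] with x hx0 hxG
    rw [Pi.zero_apply, hxG] at hx0
    exact hxG.trans (max_eq_left hx0).symm

theorem mild_growth_property_general (n N : ℕ) (Ω : Set (EuclideanSpace ℝ (Fin n)))
    (f : EuclideanSpace ℝ (Fin n) → EuclideanSpace ℝ (Fin N) →
      EuclideanSpace ℝ (Fin (N * n)) → ℝ)
    (hf0 : ∀ x u ξ, 0 ≤ f x u ξ)
    (hint : ∀ u ξ, IntegrableOn (fun x => f x u ξ) Ω volume)
    (hconv : ∀ᵐ x ∂(volume.restrict Ω),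
      ConvexOn ℝ Set.univ
        (fun z : EuclideanSpace ℝ (Fin N) × EuclideanSpace ℝ (Fin (N * n)) =>
          f x z.1 z.2)) :
    ∃ g : EuclideanSpace ℝ (Fin n) → ℝ → ℝ,
      Measurable (Function.uncurry g) ∧
      (∀ x M, 0 ≤ g x M) ∧
      (∀ M : ℝ, 0 ≤ M → IntegrableOn (fun x => g x M) Ω volume) ∧
      (∀ M : ℝ, 0 ≤ M → ∀ᵐ x ∂(volume.restrict Ω),
        ∀ u ξ, max ‖u‖ ‖ξ‖ ≤ M → f x u ξ ≤ g x M) := by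
  set H : ℕ → EuclideanSpace ℝ (Fin n) → ℝ := fun k x =>
    ∑ p : (Fin N → Bool) × (Fin (N * n) → Bool), f x (cubeVertex k p.1) (cubeVertex k p.2)
  obtain ⟨g, hg, hg0, hgi, hgH⟩ := exists_measurable_uncurry_ae_eq_natCeil (H := H)
    (fun k => integrable_finsetSum _ fun _ _ => hint _ _)
    (fun k => Filter.Eventually.of_forall fun x => Finset.sum_nonneg fun _ _ => hf0 _ _ _)
  refine ⟨g, hg, hg0, fun M _ => hgi M, fun M _ => ?_⟩
  filter_upwards [hconv, hgH M] with x hx hxg u ξ huξ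
  have hM : M ≤ ⌈M⌉₊ := Nat.le_ceil M
  have hmem : (u, ξ) ∈ convexHull ℝ
      (range (Prod.map (cubeVertex (⌈M⌉₊ : ℝ)) (cubeVertex (⌈M⌉₊ : ℝ)))) := by
    rw [range_prodMap, convexHull_prod]
    exact ⟨mem_convexHull_range_cubeVertex (by linarith [le_max_left ‖u‖ ‖ξ‖]),
      mem_convexHull_range_cubeVertex (by linarith [le_max_right ‖u‖ ‖ξ‖])⟩
  calc f x u ξ ≤ H ⌈M⌉₊ x := hx.le_sum_of_mem_convexHull_range (fun _ => hf0 _ _ _) hmem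
    _ = g x M := hxg

/-- If `x ↦ f(x,u,ξ)` is integrable on the bounded open set `Ω` for every `(u,ξ)` and
`(u,ξ) ↦ f(x,u,ξ)` is convex for a.e. `x ∈ Ω`, then there is a measurable map
`g : Ω × [0,∞) → [0,∞)` with `x ↦ g(x,M)` integrable for every `M ≥ 0` and
`0 ≤ f(x,u,ξ) ≤ g(x,M)` for a.e. `x ∈ Ω` and all `(u,ξ)` with `max{|u|,|ξ|} ≤ M`. -/
theorem mild_growth_property (n N : ℕ) (Ω : Set (EuclideanSpace ℝ (Fin n)))
    (hΩo : IsOpen Ω) (hΩb : Bornology.IsBounded Ω)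
    (f : EuclideanSpace ℝ (Fin n) → EuclideanSpace ℝ (Fin N) →
      EuclideanSpace ℝ (Fin (N * n)) → ℝ)
    (hf0 : ∀ x u ξ, 0 ≤ f x u ξ)
    (hint : ∀ u ξ, IntegrableOn (fun x => f x u ξ) Ω volume)
    (hconv : ∀ᵐ x ∂(volume.restrict Ω),
      ConvexOn ℝ Set.univ
        (fun z : EuclideanSpace ℝ (Fin N) × EuclideanSpace ℝ (Fin (N * n)) =>
          f x z.1 z.2)) :
    ∃ g : EuclideanSpace ℝ (Fin n) → ℝ → ℝ,
      Measurable (Function.uncurry g) ∧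
      (∀ x M, 0 ≤ g x M) ∧
      (∀ M : ℝ, 0 ≤ M → IntegrableOn (fun x => g x M) Ω volume) ∧
      (∀ M : ℝ, 0 ≤ M → ∀ᵐ x ∂(volume.restrict Ω),
        ∀ u ξ, max ‖u‖ ‖ξ‖ ≤ M → f x u ξ ≤ g x M) :=
  mild_growth_property_general n N Ω f hf0 hint hconv
end

section
/- For every α > 0 there exists a constant c(α) ≥ 1 such that for all u, v ∈ ℝ^N one has (1/c(α)) |⟦v⟧^α − ⟦u⟧^α| ≤ (|u| + |v|)^{α−1} |v − u| ≤ c(α) |⟦v⟧^α − ⟦u⟧^α|. -/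
open Real

/-- The power `⟦w⟧^α := |w|^{α−1} w` (with `⟦0⟧^α = 0`). -/
noncomputable def vpow {N : ℕ} (α : ℝ) (w : EuclideanSpace ℝ (Fin N)) :
    EuclideanSpace ℝ (Fin N) :=
  ‖w‖ ^ (α - 1) • w

/-!
Write `a = ‖u‖`, `b = ‖v‖`. Both `‖⟦v⟧^α - ⟦u⟧^α‖²` and `‖v - u‖²` are affine functions of
`⟪u, v⟫ ∈ [-a b, a b]`, so each inequality only has to be checked when `u` and `v` point in the
same or in opposite directions. There it becomes one of the scalar comparisons
`|b^α - a^α| ≍ (a + b)^(α-1) |b - a|` and `a^α + b^α ≍ (a + b)^α`. For `0 ≤ a ≤ b` the first one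
follows, after normalising `b = 1`, from Bernoulli's inequality and the monotonicity of `t ↦ t^α`
on `[0, 1]`, combined with `b^(α-1) ≍ (a + b)^(α-1)` up to the factor `2^|α-1|`.
-/

open scoped RealInnerProductSpace

lemma sub_mul_le_sub_mul_of_abs_le {a b a' b' s m : ℝ} (hs : |s| ≤ m)
    (hm : a - b * m ≤ a' - b' * m) (hm' : a + b * m ≤ a' + b' * m) :
    a - b * s ≤ a' - b' * s := by
  obtain ⟨hs₁, hs₂⟩ := abs_le.mp hs
  rcases le_total b b' with h | h <;> nlinarith

section InnerProduct

variable {E : Type*} [NormedAddCommGroup E] [InnerProductSpace ℝ E]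

lemma norm_smul_sub_smul_sq (p q : ℝ) (u v : E) :
    ‖q • v - p • u‖ ^ 2 = (q * ‖v‖) ^ 2 + (p * ‖u‖) ^ 2 - 2 * (p * q) * ⟪u, v⟫ := by
  rw [norm_sub_sq_real, norm_smul, norm_smul, real_inner_smul_left, real_inner_smul_right,
    real_inner_comm, Real.norm_eq_abs, Real.norm_eq_abs, mul_pow, mul_pow, sq_abs, sq_abs]
  ring

theorem norm_smul_sub_smul_le_of_abs_le {p q p' q' : ℝ} {u v : E}
    (h_same : |q * ‖v‖ - p * ‖u‖| ≤ |q' * ‖v‖ - p' * ‖u‖|)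
    (h_opp : |q * ‖v‖ + p * ‖u‖| ≤ |q' * ‖v‖ + p' * ‖u‖|) :
    ‖q • v - p • u‖ ≤ ‖q' • v - p' • u‖ := by
  rw [← sq_le_sq] at h_same h_opp
  rw [← sq_le_sq₀ (norm_nonneg _) (norm_nonneg _), norm_smul_sub_smul_sq, norm_smul_sub_smul_sq]
  refine sub_mul_le_sub_mul_of_abs_le (abs_real_inner_le_norm u v) ?_ ?_
  · linear_combination h_same
  · linear_combination h_opp

end InnerProduct

section Rpow

variable {α β a b t x y : ℝ}

lemma rpow_sub_one_mul_self (hx : 0 ≤ x) (hα : α ≠ 0) : x ^ (α - 1) * x = x ^ α := by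
  rw [← rpow_add_one' hx (by simpa using hα), sub_add_cancel]

lemma one_sub_rpow_le_max_mul (hα : 0 < α) (ht₀ : 0 ≤ t) (ht₁ : t ≤ 1) :
    1 - t ^ α ≤ max 1 α * (1 - t) := by
  rcases le_total α 1 with h | h
  · have : t ≤ t ^ α := by simpa using rpow_le_rpow_of_exponent_ge' ht₀ ht₁ hα.le h
    nlinarith [le_max_left 1 α]
  · have := one_add_mul_self_le_rpow_one_add (s := t - 1) (by linarith) h
    rw [add_sub_cancel] at this
    nlinarith [le_max_right 1 α]

lemma one_sub_le_max_inv_mul (hα : 0 < α) (ht₀ : 0 ≤ t) (ht₁ : t ≤ 1) :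
    1 - t ≤ max 1 α⁻¹ * (1 - t ^ α) := by
  have ht_rpow : t ^ α ≤ 1 := rpow_le_one ht₀ ht₁ hα.le
  rcases le_total α 1 with h | h
  · have := rpow_one_add_le_one_add_mul_self (s := t - 1) (by linarith) hα.le h
    rw [add_sub_cancel] at this
    calc 1 - t = α⁻¹ * (α * (1 - t)) := by field_simp
      _ ≤ α⁻¹ * (1 - t ^ α) := by gcongr; linarith
      _ ≤ max 1 α⁻¹ * (1 - t ^ α) := by gcongr; exact le_max_right _ _
  · have : t ^ α ≤ t := by simpa using rpow_le_rpow_of_exponent_ge' ht₀ ht₁ zero_le_one h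
    nlinarith [le_max_left 1 α⁻¹]

lemma rpow_mul_one_sub_div_rpow (ha : 0 ≤ a) (hb : 0 < b) :
    b ^ α * (1 - (a / b) ^ α) = b ^ α - a ^ α := by
  rw [div_rpow ha hb.le]
  field_simp

lemma rpow_mul_one_sub_div (hα : α ≠ 0) (hb : 0 < b) :
    b ^ α * (1 - a / b) = b ^ (α - 1) * (b - a) := by
  rw [← rpow_sub_one_mul_self hb.le hα]
  field_simp

lemma rpow_sub_rpow_le_max_mul (hα : 0 < α) (ha : 0 ≤ a) (hab : a ≤ b) :
    b ^ α - a ^ α ≤ max 1 α * (b ^ (α - 1) * (b - a)) := by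
  obtain rfl | hb := (ha.trans hab).eq_or_lt
  · simp [le_antisymm hab ha, zero_rpow hα.ne']
  have key := one_sub_rpow_le_max_mul hα (div_nonneg ha hb.le) ((div_le_one hb).mpr hab)
  calc b ^ α - a ^ α = b ^ α * (1 - (a / b) ^ α) := (rpow_mul_one_sub_div_rpow ha hb).symm
    _ ≤ b ^ α * (max 1 α * (1 - a / b)) := by gcongr
    _ = max 1 α * (b ^ (α - 1) * (b - a)) := by
      rw [mul_left_comm, rpow_mul_one_sub_div hα.ne' hb]

lemma rpow_mul_sub_le_max_inv_mul (hα : 0 < α) (ha : 0 ≤ a) (hab : a ≤ b) :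
    b ^ (α - 1) * (b - a) ≤ max 1 α⁻¹ * (b ^ α - a ^ α) := by
  obtain rfl | hb := (ha.trans hab).eq_or_lt
  · simp [le_antisymm hab ha, zero_rpow hα.ne']
  have key := one_sub_le_max_inv_mul hα (div_nonneg ha hb.le) ((div_le_one hb).mpr hab)
  calc b ^ (α - 1) * (b - a) = b ^ α * (1 - a / b) := (rpow_mul_one_sub_div hα.ne' hb).symm
    _ ≤ b ^ α * (max 1 α⁻¹ * (1 - (a / b) ^ α)) := by gcongr
    _ = max 1 α⁻¹ * (b ^ α - a ^ α) := by
      rw [mul_left_comm, rpow_mul_one_sub_div_rpow ha hb]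

lemma rpow_le_two_rpow_abs_mul_rpow (hx : 0 ≤ x) (hxy : x ≤ 2 * y) (hyx : y ≤ 2 * x) :
    x ^ β ≤ 2 ^ |β| * y ^ β := by
  obtain rfl | hx := hx.eq_or_lt
  · obtain rfl : y = 0 := by linarith
    exact le_mul_of_one_le_left (rpow_nonneg le_rfl _) (one_le_rpow one_le_two (abs_nonneg _))
  have hy : 0 < y := by linarith
  rcases le_total 0 β with hβ | hβ
  · calc x ^ β ≤ (2 * y) ^ β := rpow_le_rpow hx.le hxy hβ
      _ = 2 ^ |β| * y ^ β := by rw [mul_rpow zero_le_two hy.le, abs_of_nonneg hβ]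
  · calc x ^ β = 2 ^ (-β) * (2 * x) ^ β := by
          rw [mul_rpow zero_le_two hx.le, ← mul_assoc, ← rpow_add two_pos, neg_add_cancel,
            rpow_zero, one_mul]
      _ ≤ 2 ^ |β| * y ^ β := by
          rw [abs_of_nonpos hβ]
          exact mul_le_mul_of_nonneg_left (rpow_le_rpow_of_nonpos hy hyx hβ) (by positivity)

end Rpow

/-- `max 1 α` and `max 1 α⁻¹` (both at most `α + α⁻¹`) compare `b^α - a^α` with
`b^(α-1) (b - a)`, and `2^|α-1|` compares `b^(α-1)` with `(a + b)^(α-1)`. -/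
noncomputable def vpowConst (α : ℝ) : ℝ := 2 ^ |α - 1| * (α + α⁻¹)

section VpowConst

variable {α : ℝ}

lemma two_le_add_inv (hα : 0 < α) : 2 ≤ α + α⁻¹ := by
  have : α * α⁻¹ = 1 := mul_inv_cancel₀ hα.ne'
  nlinarith [sq_nonneg (α - 1), inv_pos.mpr hα]

lemma two_le_vpowConst (hα : 0 < α) : 2 ≤ vpowConst α := by
  simpa [vpowConst] using mul_le_mul (one_le_rpow one_le_two (abs_nonneg _))
    (two_le_add_inv hα) zero_le_two (by positivity)

lemma max_mul_two_rpow_le_vpowConst (hα : 0 < α) : max 1 α * 2 ^ |α - 1| ≤ vpowConst α := by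
  rw [vpowConst, mul_comm]
  gcongr
  exact max_le (by linarith [two_le_add_inv hα]) (le_add_of_nonneg_right (inv_pos.mpr hα).le)

lemma two_rpow_mul_max_inv_le_vpowConst (hα : 0 < α) :
    2 ^ |α - 1| * max 1 α⁻¹ ≤ vpowConst α := by
  rw [vpowConst]
  gcongr
  exact max_le (by linarith [two_le_add_inv hα]) (le_add_of_nonneg_left hα.le)

lemma two_rpow_le_vpowConst (hα : 0 < α) : (2 : ℝ) ^ α ≤ vpowConst α :=
  calc (2 : ℝ) ^ α ≤ 2 ^ (|α - 1| + 1) := rpow_le_rpow_of_exponent_le one_le_two (by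
        linarith [le_abs_self (α - 1)])
    _ = 2 ^ |α - 1| * 2 := by rw [rpow_add_one two_ne_zero]
    _ ≤ vpowConst α := mul_le_mul_of_nonneg_left (two_le_add_inv hα) (by positivity)

end VpowConst

section Comparison

variable {α a b : ℝ}

lemma abs_rpow_sub_rpow_le_vpowConst_mul (hα : 0 < α) (ha : 0 ≤ a) (hb : 0 ≤ b) :
    |b ^ α - a ^ α| ≤ vpowConst α * ((a + b) ^ (α - 1) * |b - a|) := by
  wlog hab : a ≤ b generalizing a b
  · simpa only [add_comm, abs_sub_comm] using this hb ha (le_of_not_ge hab)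
  rw [abs_of_nonneg (sub_nonneg.2 (rpow_le_rpow ha hab hα.le)), abs_of_nonneg (sub_nonneg.2 hab)]
  have hcmp : b ^ (α - 1) ≤ 2 ^ |α - 1| * (a + b) ^ (α - 1) :=
    rpow_le_two_rpow_abs_mul_rpow hb (by linarith) (by linarith)
  calc b ^ α - a ^ α ≤ max 1 α * (b ^ (α - 1) * (b - a)) := rpow_sub_rpow_le_max_mul hα ha hab
    _ ≤ max 1 α * (2 ^ |α - 1| * (a + b) ^ (α - 1) * (b - a)) := by gcongr
    _ = max 1 α * 2 ^ |α - 1| * ((a + b) ^ (α - 1) * (b - a)) := by ring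
    _ ≤ vpowConst α * ((a + b) ^ (α - 1) * (b - a)) :=
      mul_le_mul_of_nonneg_right (max_mul_two_rpow_le_vpowConst hα)
        (mul_nonneg (rpow_nonneg (by linarith) _) (sub_nonneg.2 hab))

lemma rpow_mul_abs_sub_le_vpowConst_mul (hα : 0 < α) (ha : 0 ≤ a) (hb : 0 ≤ b) :
    (a + b) ^ (α - 1) * |b - a| ≤ vpowConst α * |b ^ α - a ^ α| := by
  wlog hab : a ≤ b generalizing a b
  · simpa only [add_comm, abs_sub_comm] using this hb ha (le_of_not_ge hab)
  rw [abs_of_nonneg (sub_nonneg.2 (rpow_le_rpow ha hab hα.le)), abs_of_nonneg (sub_nonneg.2 hab)]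
  have hcmp : (a + b) ^ (α - 1) ≤ 2 ^ |α - 1| * b ^ (α - 1) :=
    rpow_le_two_rpow_abs_mul_rpow (by linarith) (by linarith) (by linarith)
  calc (a + b) ^ (α - 1) * (b - a) ≤ 2 ^ |α - 1| * (b ^ (α - 1) * (b - a)) := by
        rw [← mul_assoc]; gcongr
    _ ≤ 2 ^ |α - 1| * (max 1 α⁻¹ * (b ^ α - a ^ α)) :=
        mul_le_mul_of_nonneg_left (rpow_mul_sub_le_max_inv_mul hα ha hab) (by positivity)
    _ = 2 ^ |α - 1| * max 1 α⁻¹ * (b ^ α - a ^ α) := by ring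
    _ ≤ vpowConst α * (b ^ α - a ^ α) :=
        mul_le_mul_of_nonneg_right (two_rpow_mul_max_inv_le_vpowConst hα)
          (sub_nonneg.2 (rpow_le_rpow ha hab hα.le))

lemma add_rpow_le_vpowConst_mul (hα : 0 < α) (ha : 0 ≤ a) (hb : 0 ≤ b) :
    (a + b) ^ α ≤ vpowConst α * (a ^ α + b ^ α) := by
  wlog hab : a ≤ b generalizing a b
  · simpa only [add_comm] using this hb ha (le_of_not_ge hab)
  have ha' : 0 ≤ a ^ α := rpow_nonneg ha α
  calc (a + b) ^ α ≤ (2 * b) ^ α := by gcongr; linarith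
    _ = 2 ^ α * b ^ α := mul_rpow zero_le_two hb
    _ ≤ vpowConst α * (a ^ α + b ^ α) :=
      mul_le_mul (two_rpow_le_vpowConst hα) (by linarith) (by positivity)
        (by linarith [two_le_vpowConst hα])

lemma rpow_add_rpow_le_vpowConst_mul (hα : 0 < α) (ha : 0 ≤ a) (hb : 0 ≤ b) :
    a ^ α + b ^ α ≤ vpowConst α * (a + b) ^ α := by
  have hab : a ^ α ≤ (a + b) ^ α := by gcongr; linarith
  have hba : b ^ α ≤ (a + b) ^ α := by gcongr; linarith
  nlinarith [two_le_vpowConst hα, rpow_nonneg (add_nonneg ha hb) α]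

end Comparison

section Vpow

variable {N : ℕ} {α : ℝ}

lemma norm_vpow_sub_vpow_le (hα : 0 < α) (u v : EuclideanSpace ℝ (Fin N)) :
    ‖vpow α v - vpow α u‖ ≤ vpowConst α * (‖u‖ + ‖v‖) ^ (α - 1) * ‖v - u‖ := by
  set a := ‖u‖
  set b := ‖v‖
  set c := vpowConst α * (a + b) ^ (α - 1)
  have ha : 0 ≤ a := norm_nonneg u
  have hb : 0 ≤ b := norm_nonneg v
  have hc : 0 ≤ c := mul_nonneg (by linarith [two_le_vpowConst hα]) (by positivity)
  have h_same : |b ^ (α - 1) * b - a ^ (α - 1) * a| ≤ |c * b - c * a| :=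
    calc |b ^ (α - 1) * b - a ^ (α - 1) * a| = |b ^ α - a ^ α| := by
          rw [rpow_sub_one_mul_self ha hα.ne', rpow_sub_one_mul_self hb hα.ne']
      _ ≤ vpowConst α * ((a + b) ^ (α - 1) * |b - a|) :=
          abs_rpow_sub_rpow_le_vpowConst_mul hα ha hb
      _ = |c * b - c * a| := by rw [← mul_sub, abs_mul, abs_of_nonneg hc, mul_assoc]
  have h_opp : |b ^ (α - 1) * b + a ^ (α - 1) * a| ≤ |c * b + c * a| :=
    calc |b ^ (α - 1) * b + a ^ (α - 1) * a| = a ^ α + b ^ α := by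
          rw [rpow_sub_one_mul_self ha hα.ne', rpow_sub_one_mul_self hb hα.ne', add_comm,
            abs_of_nonneg (by positivity)]
      _ ≤ vpowConst α * (a + b) ^ α := rpow_add_rpow_le_vpowConst_mul hα ha hb
      _ = |c * b + c * a| := by
          rw [← mul_add, abs_of_nonneg (by positivity), add_comm b, mul_assoc,
            rpow_sub_one_mul_self (by positivity) hα.ne']
  calc ‖vpow α v - vpow α u‖ ≤ ‖c • v - c • u‖ := norm_smul_sub_smul_le_of_abs_le h_same h_opp
    _ = c * ‖v - u‖ := by rw [← smul_sub, norm_smul, Real.norm_of_nonneg hc]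

lemma rpow_mul_norm_sub_le (hα : 0 < α) (u v : EuclideanSpace ℝ (Fin N)) :
    (‖u‖ + ‖v‖) ^ (α - 1) * ‖v - u‖ ≤ vpowConst α * ‖vpow α v - vpow α u‖ := by
  set a := ‖u‖
  set b := ‖v‖
  set c := vpowConst α
  set k := (a + b) ^ (α - 1)
  have ha : 0 ≤ a := norm_nonneg u
  have hb : 0 ≤ b := norm_nonneg v
  have hc : 0 ≤ c := by linarith [two_le_vpowConst hα]
  have hk : 0 ≤ k := by positivity
  have h_same : |k * b - k * a| ≤ |c * b ^ (α - 1) * b - c * a ^ (α - 1) * a| :=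
    calc |k * b - k * a| = k * |b - a| := by rw [← mul_sub, abs_mul, abs_of_nonneg hk]
      _ ≤ c * |b ^ α - a ^ α| := rpow_mul_abs_sub_le_vpowConst_mul hα ha hb
      _ = |c * b ^ (α - 1) * b - c * a ^ (α - 1) * a| := by
          rw [mul_assoc, mul_assoc, rpow_sub_one_mul_self ha hα.ne',
            rpow_sub_one_mul_self hb hα.ne', ← mul_sub, abs_mul, abs_of_nonneg hc]
  have h_opp : |k * b + k * a| ≤ |c * b ^ (α - 1) * b + c * a ^ (α - 1) * a| :=
    calc |k * b + k * a| = (a + b) ^ α := by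
          rw [← mul_add, add_comm b, rpow_sub_one_mul_self (by positivity) hα.ne',
            abs_of_nonneg (by positivity)]
      _ ≤ c * (a ^ α + b ^ α) := add_rpow_le_vpowConst_mul hα ha hb
      _ = |c * b ^ (α - 1) * b + c * a ^ (α - 1) * a| := by
          rw [mul_assoc, mul_assoc, rpow_sub_one_mul_self ha hα.ne',
            rpow_sub_one_mul_self hb hα.ne', ← mul_add, add_comm (b ^ α),
            abs_of_nonneg (by positivity)]
  calc k * ‖v - u‖ = ‖k • v - k • u‖ := by rw [← smul_sub, norm_smul, Real.norm_of_nonneg hk]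
    _ ≤ ‖(c * b ^ (α - 1)) • v - (c * a ^ (α - 1)) • u‖ :=
        norm_smul_sub_smul_le_of_abs_le h_same h_opp
    _ = c * ‖vpow α v - vpow α u‖ := by
        rw [mul_smul, mul_smul, ← smul_sub, norm_smul, Real.norm_of_nonneg hc]
        rfl

end Vpow

/-- For every `α > 0` there exists a constant `c(α) ≥ 1` such that for all `u, v ∈ ℝ^N`,
`(1/c) |⟦v⟧^α − ⟦u⟧^α| ≤ (|u| + |v|)^{α−1} |v − u| ≤ c |⟦v⟧^α − ⟦u⟧^α|`. -/
theorem power_alpha_estimate (N : ℕ) (α : ℝ) (hα : 0 < α) :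
    ∃ c : ℝ, 1 ≤ c ∧ ∀ u v : EuclideanSpace ℝ (Fin N),
      (1 / c) * ‖vpow α v - vpow α u‖ ≤ (‖u‖ + ‖v‖) ^ (α - 1) * ‖v - u‖ ∧
      (‖u‖ + ‖v‖) ^ (α - 1) * ‖v - u‖ ≤ c * ‖vpow α v - vpow α u‖ := by
  have hc := two_le_vpowConst hα
  refine ⟨vpowConst α, by linarith, fun u v => ⟨?_, rpow_mul_norm_sub_le hα u v⟩⟩
  rw [one_div, inv_mul_le_iff₀ (by linarith), ← mul_assoc]
  exact norm_vpow_sub_vpow_le hα u v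
end

section
/- For every α > 1 there exists a constant c(α) > 0 such that for all u, v ∈ ℝ^N one has |v − u|^α ≤ c(α) |⟦v⟧^α − ⟦u⟧^α|. -/
open Real

/- Say `‖u‖ ≤ ‖v‖`, and put `p = ‖v‖^(α-1) ≥ q = ‖u‖^(α-1)`. Writing
`p (v - u) = (p v - q u) - (p - q) u` and bounding `(p - q) ‖u‖ ≤ p ‖v‖ - q ‖u‖ ≤ ‖p v - q u‖`
gives `p ‖v - u‖ ≤ 2 ‖⟦v⟧^α - ⟦u⟧^α‖`. Since `‖v - u‖ ≤ 2 ‖v‖`, also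
`‖v - u‖^(α-1) ≤ 2^(α-1) p`, and multiplying the two yields the estimate with `c = 2^α`. -/

section NormedSpace

variable {E : Type*} [SeminormedAddCommGroup E] [NormedSpace ℝ E]

lemma mul_norm_sub_le_two_mul_norm_smul_sub_smul {p q : ℝ} (hq : 0 ≤ q) (hqp : q ≤ p)
    {u v : E} (h : ‖u‖ ≤ ‖v‖) : p * ‖v - u‖ ≤ 2 * ‖p • v - q • u‖ := by
  have hp : 0 ≤ p := hq.trans hqp
  have hsplit : p • (v - u) = (p • v - q • u) - (p - q) • u := by
    rw [smul_sub, sub_smul]; abel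
  have hrest : (p - q) * ‖u‖ ≤ ‖p • v - q • u‖ := by
    calc (p - q) * ‖u‖ ≤ p * ‖v‖ - q * ‖u‖ := by nlinarith
      _ = ‖p • v‖ - ‖q • u‖ := by
        rw [norm_smul, norm_smul, Real.norm_of_nonneg hp, Real.norm_of_nonneg hq]
      _ ≤ ‖p • v - q • u‖ := norm_sub_norm_le _ _
  calc p * ‖v - u‖ = ‖p • (v - u)‖ := by rw [norm_smul, Real.norm_of_nonneg hp]
    _ ≤ ‖p • v - q • u‖ + (p - q) * ‖u‖ := by
      rw [hsplit]
      refine (norm_sub_le _ _).trans_eq ?_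
      rw [norm_smul, Real.norm_of_nonneg (sub_nonneg.mpr hqp)]
    _ ≤ 2 * ‖p • v - q • u‖ := by linarith

lemma norm_sub_rpow_le_of_norm_le {α : ℝ} (hα : 1 ≤ α) {u v : E} (h : ‖u‖ ≤ ‖v‖) :
    ‖v - u‖ ^ α ≤ 2 ^ α * ‖‖v‖ ^ (α - 1) • v - ‖u‖ ^ (α - 1) • u‖ := by
  have hα₁ : 0 ≤ α - 1 := sub_nonneg.mpr hα
  have hdist : ‖v - u‖ ≤ 2 * ‖v‖ := by linarith [norm_sub_le v u]
  have hmain := mul_norm_sub_le_two_mul_norm_smul_sub_smul (rpow_nonneg (norm_nonneg u) _)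
    (rpow_le_rpow (norm_nonneg u) h hα₁) h
  calc ‖v - u‖ ^ α = ‖v - u‖ ^ (α - 1) * ‖v - u‖ := by
        rw [← rpow_add_one' (norm_nonneg _) (by linarith), sub_add_cancel]
    _ ≤ (2 * ‖v‖) ^ (α - 1) * ‖v - u‖ := by gcongr
    _ = 2 ^ (α - 1) * (‖v‖ ^ (α - 1) * ‖v - u‖) := by
        rw [mul_rpow zero_le_two (norm_nonneg _)]; ring
    _ ≤ 2 ^ (α - 1) * (2 * ‖‖v‖ ^ (α - 1) • v - ‖u‖ ^ (α - 1) • u‖) := by gcongr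
    _ = 2 ^ α * ‖‖v‖ ^ (α - 1) • v - ‖u‖ ^ (α - 1) • u‖ := by
        rw [rpow_sub_one two_ne_zero]; ring

end NormedSpace

/-- For every `α > 1` there exists a constant `c(α) > 0` such that for all `u, v ∈ ℝ^N`,
`|v − u|^α ≤ c(α) |⟦v⟧^α − ⟦u⟧^α|`. -/
theorem power_alpha_diff_estimate (N : ℕ) (α : ℝ) (hα : 1 < α) :
    ∃ c : ℝ, 0 < c ∧ ∀ u v : EuclideanSpace ℝ (Fin N),
      ‖v - u‖ ^ α ≤ c * ‖vpow α v - vpow α u‖ := by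
  refine ⟨2 ^ α, rpow_pos_of_pos two_pos α, fun u v => ?_⟩
  rcases le_total ‖u‖ ‖v‖ with h | h
  · exact norm_sub_rpow_le_of_norm_le hα.le h
  · rw [norm_sub_rev v, norm_sub_rev (vpow α v)]
    exact norm_sub_rpow_le_of_norm_le hα.le h
end

section
/- Let Ω ⊂ ℝ^n be a bounded open set and q > 0. If (u_k)_{k∈ℕ} ⊂ L^{q+1}(Ω, ℝ^N) and u_∞ ∈ L^{q+1}(Ω, ℝ^N) are such that ⟦u_k⟧^{q+1} → ⟦u_∞⟧^{q+1} strongly in L^1(Ω, ℝ^N) as k → ∞, then u_k → u_∞ strongly in L^{q+1}(Ω, ℝ^N). -/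
open Real MeasureTheory

/-!
For `α ≥ 1` the map `w ↦ ‖w‖^(α-1) w` satisfies `‖a - b‖^α ≤ 2^α ‖V‖`, where
`V = ‖a‖^(α-1) a - ‖b‖^(α-1) b`. Indeed, if `r = ‖a‖ ≥ s = ‖b‖`, then
`r^(α-1) (a - b) = V - (r^(α-1) - s^(α-1)) b`, and the last term has norm at most
`r^α - s^α ≤ ‖V‖`; hence `r^(α-1) ‖a - b‖ ≤ 2 ‖V‖`, and `‖a - b‖ ≤ 2r` finishes.
Integrating over `Ω` bounds `∫ ‖u_k - u_∞‖^(q+1)` by `2^(q+1)` times the `L^1` distance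
of the powers.
-/

namespace RPowSMulSelf

variable {E : Type*} [NormedAddCommGroup E] [NormedSpace ℝ E] {α : ℝ}

lemma rpow_eq_rpow_sub_one_mul {x : ℝ} (hx : 0 ≤ x) (hα : α ≠ 0) :
    x ^ α = x ^ (α - 1) * x := by
  simpa using rpow_add_one' hx (y := α - 1) (by simpa using hα)

lemma norm_rpow_sub_one_smul_self (hα : α ≠ 0) (w : E) :
    ‖‖w‖ ^ (α - 1) • w‖ = ‖w‖ ^ α := by
  rw [norm_smul, norm_of_nonneg (rpow_nonneg (norm_nonneg w) _),
    rpow_eq_rpow_sub_one_mul (norm_nonneg w) hα]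

lemma continuous_rpow_sub_one_smul_self (hα : 1 ≤ α) :
    Continuous fun w : E => ‖w‖ ^ (α - 1) • w :=
  (continuous_norm.rpow_const fun _ => Or.inr (by linarith)).smul continuous_id

lemma norm_sub_rpow_le_of_norm_le (hα : 1 ≤ α) {a b : E} (hba : ‖b‖ ≤ ‖a‖) :
    ‖a - b‖ ^ α ≤ 2 ^ α * ‖‖a‖ ^ (α - 1) • a - ‖b‖ ^ (α - 1) • b‖ := by
  set r := ‖a‖
  set s := ‖b‖
  set d := ‖a - b‖
  set V := ‖a‖ ^ (α - 1) • a - ‖b‖ ^ (α - 1) • b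
  have hα0 : α ≠ 0 := by linarith
  have hα1 : 0 ≤ α - 1 := by linarith
  have hs : 0 ≤ s := norm_nonneg b
  have hV_ge_norm_diff : r ^ α - s ^ α ≤ ‖V‖ := by
    simpa only [norm_rpow_sub_one_smul_self hα0] using norm_sub_norm_le
      (‖a‖ ^ (α - 1) • a) (‖b‖ ^ (α - 1) • b)
  have hdecomp : r ^ (α - 1) • (a - b) = V - (r ^ (α - 1) - s ^ (α - 1)) • b := by
    simp only [V, r, s, smul_sub, sub_smul]
    abel
  have hsplit : r ^ (α - 1) * d ≤ ‖V‖ + (r ^ (α - 1) - s ^ (α - 1)) * s := by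
    have hrs : 0 ≤ r ^ (α - 1) - s ^ (α - 1) := sub_nonneg.2 (rpow_le_rpow hs hba hα1)
    calc r ^ (α - 1) * d = ‖r ^ (α - 1) • (a - b)‖ := by
          rw [norm_smul, norm_of_nonneg (rpow_nonneg (norm_nonneg a) _)]
      _ ≤ ‖V‖ + (r ^ (α - 1) - s ^ (α - 1)) * s := by
          rw [hdecomp]
          refine (norm_sub_le _ _).trans_eq ?_
          rw [norm_smul, norm_of_nonneg hrs]
  have hcorr : (r ^ (α - 1) - s ^ (α - 1)) * s ≤ r ^ α - s ^ α := by
    rw [rpow_eq_rpow_sub_one_mul (norm_nonneg a) hα0, rpow_eq_rpow_sub_one_mul hs hα0]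
    nlinarith [rpow_nonneg (norm_nonneg a) (α - 1)]
  have hd2r : d ≤ 2 * r := by
    linarith [norm_sub_le a b]
  calc d ^ α = d ^ (α - 1) * d := rpow_eq_rpow_sub_one_mul (norm_nonneg _) hα0
    _ ≤ (2 * r) ^ (α - 1) * d := by gcongr
    _ = 2 ^ (α - 1) * (r ^ (α - 1) * d) := by
        rw [mul_rpow zero_le_two (norm_nonneg a)]
        ring
    _ ≤ 2 ^ (α - 1) * (2 * ‖V‖) :=
        mul_le_mul_of_nonneg_left (by linarith) (rpow_nonneg zero_le_two _)
    _ = 2 ^ α * ‖V‖ := by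
        rw [rpow_eq_rpow_sub_one_mul zero_le_two hα0]
        ring

lemma norm_sub_rpow_le (hα : 1 ≤ α) (a b : E) :
    ‖a - b‖ ^ α ≤ 2 ^ α * ‖‖a‖ ^ (α - 1) • a - ‖b‖ ^ (α - 1) • b‖ := by
  rcases le_total ‖b‖ ‖a‖ with h | h
  · exact norm_sub_rpow_le_of_norm_le hα h
  · rw [norm_sub_rev, norm_sub_rev (‖a‖ ^ (α - 1) • a)]
    exact norm_sub_rpow_le_of_norm_le hα h

variable {X : Type*} [MeasurableSpace X] {μ : Measure X} {f g : X → E}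

lemma integrable_rpow_sub_one_smul_sub (hα : 1 ≤ α) (hf : MemLp f (ENNReal.ofReal α) μ)
    (hg : MemLp g (ENNReal.ofReal α) μ) :
    Integrable (fun x => ‖f x‖ ^ (α - 1) • f x - ‖g x‖ ^ (α - 1) • g x) μ := by
  have hp_ne : ENNReal.ofReal α ≠ 0 := by
    simp only [ne_eq, ENNReal.ofReal_eq_zero, not_le]
    linarith
  have hpow : ∀ {h : X → E}, MemLp h (ENNReal.ofReal α) μ →
      Integrable (fun x => ‖h x‖ ^ (α - 1) • h x) μ := fun hh => by
    refine Integrable.mono' ?_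
      ((continuous_rpow_sub_one_smul_self hα).comp_aestronglyMeasurable hh.1)
      (.of_forall fun x => (norm_rpow_sub_one_smul_self (by linarith) _).le)
    simpa [ENNReal.toReal_ofReal (by linarith : 0 ≤ α)] using
      hh.integrable_norm_rpow hp_ne ENNReal.ofReal_ne_top
  exact (hpow hf).sub (hpow hg)

lemma integral_norm_sub_rpow_le (hα : 1 ≤ α) (hf : MemLp f (ENNReal.ofReal α) μ)
    (hg : MemLp g (ENNReal.ofReal α) μ) :
    ∫ x, ‖f x - g x‖ ^ α ∂μ ≤
      2 ^ α * ∫ x, ‖‖f x‖ ^ (α - 1) • f x - ‖g x‖ ^ (α - 1) • g x‖ ∂μ := by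
  rw [← integral_const_mul]
  exact integral_mono_of_nonneg (.of_forall fun _ => rpow_nonneg (norm_nonneg _) _)
    ((integrable_rpow_sub_one_smul_sub hα hf hg).norm.const_mul _)
    (.of_forall fun x => norm_sub_rpow_le hα (f x) (g x))

end RPowSMulSelf

open RPowSMulSelf in
theorem strong_Lq1_convergence_general (n N : ℕ) (Ω : Set (EuclideanSpace ℝ (Fin n)))
    (q : ℝ) (hq : 0 < q)
    (u : ℕ → EuclideanSpace ℝ (Fin n) → EuclideanSpace ℝ (Fin N))
    (uinf : EuclideanSpace ℝ (Fin n) → EuclideanSpace ℝ (Fin N))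
    (hu : ∀ k, MemLp (u k) (ENNReal.ofReal (q + 1)) (volume.restrict Ω))
    (huinf : MemLp uinf (ENNReal.ofReal (q + 1)) (volume.restrict Ω))
    (hconv : Filter.Tendsto
      (fun k => ∫ x in Ω, ‖vpow (q + 1) (u k x) - vpow (q + 1) (uinf x)‖)
      Filter.atTop (nhds 0)) :
    Filter.Tendsto (fun k => ∫ x in Ω, ‖u k x - uinf x‖ ^ (q + 1))
      Filter.atTop (nhds 0) := by
  have hα : (1 : ℝ) ≤ q + 1 := by linarith
  simp only [vpow] at hconv
  refine squeeze_zero (fun k => integral_nonneg fun _ => rpow_nonneg (norm_nonneg _) _)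
    (fun k => integral_norm_sub_rpow_le hα (hu k) huinf) ?_
  simpa using hconv.const_mul (2 ^ (q + 1))

/-- If `⟦u_k⟧^{q+1} → ⟦u_∞⟧^{q+1}` strongly in `L^1(Ω,ℝ^N)`, then
`u_k → u_∞` strongly in `L^{q+1}(Ω,ℝ^N)`. -/
theorem strong_Lq1_convergence (n N : ℕ) (Ω : Set (EuclideanSpace ℝ (Fin n)))
    (hΩo : IsOpen Ω) (hΩb : Bornology.IsBounded Ω) (q : ℝ) (hq : 0 < q)
    (u : ℕ → EuclideanSpace ℝ (Fin n) → EuclideanSpace ℝ (Fin N))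
    (uinf : EuclideanSpace ℝ (Fin n) → EuclideanSpace ℝ (Fin N))
    (hu : ∀ k, MemLp (u k) (ENNReal.ofReal (q + 1)) (volume.restrict Ω))
    (huinf : MemLp uinf (ENNReal.ofReal (q + 1)) (volume.restrict Ω))
    (hconv : Filter.Tendsto
      (fun k => ∫ x in Ω, ‖vpow (q + 1) (u k x) - vpow (q + 1) (uinf x)‖)
      Filter.atTop (nhds 0)) :
    Filter.Tendsto (fun k => ∫ x in Ω, ‖u k x - uinf x‖ ^ (q + 1))
      Filter.atTop (nhds 0) :=
  strong_Lq1_convergence_general n N Ω q hq u uinf hu huinf hconv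
end

section
/- Let p ∈ (1,∞), L > 0, G ≥ 0 a real number, and let f : ℝ^N × ℝ^{Nn} → [0,∞) be convex and satisfy f(u,ξ) ≤ L(|ξ|^p + |u|^p + G) for all (u,ξ) ∈ ℝ^N × ℝ^{Nn}. Then there exists a constant c = c(p,L) such that |f(u_1,ξ_1) − f(u_2,ξ_2)| ≤ c [ (|ξ_1| + |ξ_2| + |u_1| + |u_2|)^{p−1} + G^{(p−1)/p} ] (|u_1 − u_2| + |ξ_1 − ξ_2|) holds for all (u_1,ξ_1), (u_2,ξ_2) ∈ ℝ^N × ℝ^{Nn}. -/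
/-!
A nonnegative convex function bounded by `M` on a ball of radius `4r` is `M / r`-Lipschitz on the
concentric ball of radius `r`. For the two given points take `r = S + G^{1/p}`, where `S` is the
sum of their norms: then both points lie in the ball of radius `r`, and the `p`-growth bound
gives `M ≲ L r^p` on the ball of radius `4r`. Hence the Lipschitz constant is `≲ L r^{p-1}`,
and `r^{p-1} ≤ 2^{p-1} (S^{p-1} + G^{(p-1)/p})`.
-/

theorem Real.add_rpow_le_two_rpow_mul_rpow_add_rpow {a b p : ℝ} (ha : 0 ≤ a) (hb : 0 ≤ b)
    (hp : 0 ≤ p) : (a + b) ^ p ≤ 2 ^ p * (a ^ p + b ^ p) := by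
  rcases le_total a b with hab | hab
  · calc (a + b) ^ p ≤ (2 * b) ^ p := by gcongr; linarith
      _ = 2 ^ p * b ^ p := Real.mul_rpow zero_le_two hb
      _ ≤ 2 ^ p * (a ^ p + b ^ p) := by gcongr; linarith [Real.rpow_nonneg ha p]
  · calc (a + b) ^ p ≤ (2 * a) ^ p := by gcongr; linarith
      _ = 2 ^ p * a ^ p := Real.mul_rpow zero_le_two ha
      _ ≤ 2 ^ p * (a ^ p + b ^ p) := by gcongr; linarith [Real.rpow_nonneg hb p]

theorem ConvexOn.abs_sub_le_of_le_mul_radius {E : Type*} [NormedAddCommGroup E]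
    [NormedSpace ℝ E] {f : E → ℝ} (hf : ConvexOn ℝ Set.univ f) (hf0 : ∀ z, 0 ≤ f z) {r K : ℝ}
    (hr : 0 ≤ r) (hK : ∀ z, ‖z‖ < 4 * r → f z ≤ K * r) {x y : E} (hx : ‖x‖ ≤ r)
    (hy : ‖y‖ ≤ r) : |f x - f y| ≤ K * ‖x - y‖ := by
  rcases hr.eq_or_lt with rfl | hr
  · simp [norm_le_zero_iff.1 hx, norm_le_zero_iff.1 hy]
  have hK0 : 0 ≤ K :=
    nonneg_of_mul_nonneg_left ((hf0 0).trans (hK 0 (by simpa using hr))) hr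
  have hlip := (hf.subset (Set.subset_univ _) (convex_ball 0 (4 * r))).lipschitzOnWith_of_abs_le
    (ε := 2 * r) (by positivity) fun z hz ↦ (abs_of_nonneg (hf0 z)).trans_le
      (hK z (by simpa using hz))
  have hball : Metric.closedBall (0 : E) r ⊆ Metric.ball 0 (4 * r - 2 * r) :=
    Metric.closedBall_subset_ball (by linarith)
  have hconst : 2 * (K * r) / (2 * r) = K := by field_simp
  simpa [hconst, Real.coe_toNNReal _ hK0, dist_eq_norm] using
    hlip.dist_le_mul x (hball (by simpa using hx)) y (hball (by simpa using hy))

theorem le_of_pGrowth_of_norm_le {E F : Type*} [SeminormedAddCommGroup E]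
    [SeminormedAddCommGroup F] {f : E → F → ℝ} {p L G r : ℝ} (hp : 1 < p) (hL : 0 ≤ L)
    (hG : 0 ≤ G) (hgrow : ∀ u ξ, f u ξ ≤ L * (‖ξ‖ ^ p + ‖u‖ ^ p + G)) (hGr : G ^ p⁻¹ ≤ r)
    {z : E × F} (hz : ‖z‖ ≤ 4 * r) : f z.1 z.2 ≤ 3 * 4 ^ p * L * r ^ (p - 1) * r := by
  have hr : 0 ≤ r := (Real.rpow_nonneg hG _).trans hGr
  obtain ⟨hz₁, hz₂⟩ := norm_prod_le_iff.1 hz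
  have hG4r : G ≤ (4 * r) ^ p := by
    calc G = (G ^ p⁻¹) ^ p := (Real.rpow_inv_rpow hG (by positivity)).symm
      _ ≤ (4 * r) ^ p := by gcongr; linarith
  have hpow : r ^ (p - 1) * r = r ^ p := by
    rw [← Real.rpow_add_one' hr (by linarith), sub_add_cancel]
  calc f z.1 z.2 ≤ L * (‖z.2‖ ^ p + ‖z.1‖ ^ p + G) := hgrow z.1 z.2
    _ ≤ L * ((4 * r) ^ p + (4 * r) ^ p + (4 * r) ^ p) := by gcongr
    _ = 3 * 4 ^ p * L * r ^ (p - 1) * r := by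
      rw [mul_assoc, hpow, Real.mul_rpow zero_le_four hr]; ring

/-- Local Lipschitz estimate: if `f : ℝ^N × ℝ^{Nn} → [0,∞)` is convex and satisfies the
`p`-growth condition `f(u,ξ) ≤ L(|ξ|^p + |u|^p + G)`, then there is `c = c(p,L)` such that
`|f(u₁,ξ₁) − f(u₂,ξ₂)| ≤ c [(|ξ₁|+|ξ₂|+|u₁|+|u₂|)^{p−1} + G^{(p−1)/p}] (|u₁−u₂| + |ξ₁−ξ₂|)`. -/
theorem local_lipschitz_estimate (N n : ℕ) (p L : ℝ) (hp : 1 < p) (hL : 0 < L) :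
    ∃ c : ℝ, 0 < c ∧ ∀ G : ℝ, 0 ≤ G →
      ∀ f : EuclideanSpace ℝ (Fin N) → EuclideanSpace ℝ (Fin (N * n)) → ℝ,
        (∀ u ξ, 0 ≤ f u ξ) →
        ConvexOn ℝ Set.univ
          (fun z : EuclideanSpace ℝ (Fin N) × EuclideanSpace ℝ (Fin (N * n)) =>
            f z.1 z.2) →
        (∀ u ξ, f u ξ ≤ L * (‖ξ‖ ^ p + ‖u‖ ^ p + G)) →
        ∀ u₁ u₂ : EuclideanSpace ℝ (Fin N),
        ∀ ξ₁ ξ₂ : EuclideanSpace ℝ (Fin (N * n)),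
          |f u₁ ξ₁ - f u₂ ξ₂| ≤
            c * ((‖ξ₁‖ + ‖ξ₂‖ + ‖u₁‖ + ‖u₂‖) ^ (p - 1) + G ^ ((p - 1) / p)) *
              (‖u₁ - u₂‖ + ‖ξ₁ - ξ₂‖) := by
  refine ⟨3 * 4 ^ p * L * 2 ^ (p - 1), by positivity, ?_⟩
  intro G hG f hf0 hconv hgrow u₁ u₂ ξ₁ ξ₂
  set S := ‖ξ₁‖ + ‖ξ₂‖ + ‖u₁‖ + ‖u₂‖ with hS_def
  set r := S + G ^ p⁻¹
  have hS : 0 ≤ S := by positivity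
  have hGr : G ^ p⁻¹ ≤ r := le_add_of_nonneg_left hS
  have hSr : S ≤ r := le_add_of_nonneg_right (by positivity)
  have hnorms : 0 ≤ ‖u₁‖ ∧ 0 ≤ ‖u₂‖ ∧ 0 ≤ ‖ξ₁‖ ∧ 0 ≤ ‖ξ₂‖ :=
    ⟨norm_nonneg _, norm_nonneg _, norm_nonneg _, norm_nonneg _⟩
  have hx : ‖(u₁, ξ₁)‖ ≤ r := norm_prod_le_iff.2 ⟨by linarith, by linarith⟩
  have hy : ‖(u₂, ξ₂)‖ ≤ r := norm_prod_le_iff.2 ⟨by linarith, by linarith⟩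
  have hdist : ‖(u₁, ξ₁) - (u₂, ξ₂)‖ ≤ ‖u₁ - u₂‖ + ‖ξ₁ - ξ₂‖ :=
    norm_prod_le_iff.2
      ⟨le_add_of_nonneg_right (norm_nonneg _), le_add_of_nonneg_left (norm_nonneg _)⟩
  have hrpow : r ^ (p - 1) ≤ 2 ^ (p - 1) * (S ^ (p - 1) + G ^ ((p - 1) / p)) := by
    rw [show (p - 1) / p = p⁻¹ * (p - 1) by ring, Real.rpow_mul hG]
    exact Real.add_rpow_le_two_rpow_mul_rpow_add_rpow hS (by positivity) (by linarith)
  calc |f u₁ ξ₁ - f u₂ ξ₂| ≤ 3 * 4 ^ p * L * r ^ (p - 1) * ‖(u₁, ξ₁) - (u₂, ξ₂)‖ :=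
        hconv.abs_sub_le_of_le_mul_radius (fun z ↦ hf0 z.1 z.2) (by positivity)
          (fun z hz ↦ le_of_pGrowth_of_norm_le hp hL.le hG hgrow hGr hz.le) hx hy
    _ ≤ 3 * 4 ^ p * L * (2 ^ (p - 1) * (S ^ (p - 1) + G ^ ((p - 1) / p))) *
          (‖u₁ - u₂‖ + ‖ξ₁ - ξ₂‖) := by gcongr
    _ = _ := by ring
end
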